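/- arXiv:1210.8206 — 3 statements merged into one kernel-verified Lean document; each statement's English description precedes it below -/
import Mathlib

section
/- Let λ be a weakly decreasing sequence of n nonnegative integers and μ a weakly decreasing sequence of n-2 nonnegative integers doubly interlacing λ. Let (x₁, z₁, ..., x_{n-1}, z_{n-1}) be the weakly decreasing rearrangement of (λ₁,...,λ_n, μ₁,...,μ_{n-2}). Then the map sending an interlacing pattern μ ⊑ κ ⊑ λ to the tuple of GL₂ Gelfand-Tsetlin patterns with top rows (x_i, z_i) and middle entries κ_i is a bijection from the set of sequences κ with μ ⊑ κ ⊑ λ to the set of (n-1)-tuples (y₁,...,y_{n-1}) of integers with x_i ≥ y_i ≥ z_i for each i. -/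
/-- `a` is a weakly decreasing sequence of length `k` (entries `a 0, …, a (k-1)`). -/
def WeaklyDecr (k : ℕ) (a : ℕ → ℤ) : Prop :=
  ∀ i : ℕ, i + 1 < k → a (i + 1) ≤ a i

/-- The entries `a 0, …, a (k-1)` are nonnegative. -/
def NonnegSeq (k : ℕ) (a : ℕ → ℤ) : Prop :=
  ∀ i : ℕ, i < k → 0 ≤ a i

/-- `Interlaces k β α` : the length-`(k-1)` sequence `β` interlaces the length-`k`
sequence `α`, i.e. `α 0 ≥ β 0 ≥ α 1 ≥ β 1 ≥ ⋯ ≥ β (k-2) ≥ α (k-1)`. -/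
def Interlaces (k : ℕ) (β α : ℕ → ℤ) : Prop :=
  ∀ i : ℕ, i + 1 < k → β i ≤ α i ∧ α (i + 1) ≤ β i

/-- `μ` (length `n-2`) doubly interlaces `lam` (length `n`):
there is a weakly decreasing `κ` of length `n-1` with `μ ⊑ κ ⊑ lam`. -/
def DoublyInterlaces (n : ℕ) (μ lam : ℕ → ℤ) : Prop :=
  ∃ κ : ℕ → ℤ, WeaklyDecr (n - 1) κ ∧ Interlaces n κ lam ∧ Interlaces (n - 1) μ κ

/-- `s` is the weakly decreasing rearrangement
`(x₁, z₁, …, x_{n-1}, z_{n-1})` (with `x j = s (2*j)`, `z j = s (2*j+1)` in 0-based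
indexing) of the concatenation of `lam` (length `n`) and `μ` (length `n-2`). -/
def Rearr (n : ℕ) (lam μ s : ℕ → ℤ) : Prop :=
  WeaklyDecr (2 * n - 2) s ∧
    ((List.range (2 * n - 2)).map s).Perm
      (((List.range n).map lam) ++ ((List.range (n - 2)).map μ))

/-- Entry access for a length-`k` tuple, with default `0` out of range. -/
def fget {k : ℕ} (a : Fin k → ℤ) (i : ℕ) : ℤ := if h : i < k then a ⟨i, h⟩ else 0

/-!
Write `n = N + 2`. Interlacing `μ ⊑ κ ⊑ λ` is a system of two-sided bounds on each `κ j`: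
`κ j` lies between `z j = max (λ (j+1)) (μ j)` and `x j = min (λ j) (μ (j-1))`, where the
missing `μ (-1)` and `μ N` are read as `+∞` and `-∞`. Since `z j ≥ x (j+1)`, the sequence
`x 0, z 0, x 1, z 1, …, x N, z N` is weakly decreasing as soon as some `κ` meets all the
bounds, and it is a rearrangement of `λ` and `μ` because each pair `z j, x (j+1)` is a
rearrangement of `λ (j+1), μ j`. A weakly decreasing rearrangement is unique, so it is `s`,
and the two sets in the theorem coincide.
-/

theorem Interlaces.weaklyDecr {k : ℕ} {β α : ℕ → ℤ} (h : Interlaces k β α) :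
    WeaklyDecr (k - 1) β :=
  fun i hi => (h (i + 1) (by omega)).1.trans (h i (by omega)).2

theorem WeaklyDecr.sortedGE {m : ℕ} {f : ℕ → ℤ} (h : WeaklyDecr m f) :
    ((List.range m).map f).SortedGE := by
  rw [List.sortedGE_iff_isChain, List.isChain_map, List.isChain_range]
  exact fun i hi => h i (by omega)

theorem List.perm_max_min {α : Type*} [LinearOrder α] (a b : α) :
    [max a b, min a b].Perm [a, b] := by
  rcases le_total a b with h | h
  · rw [max_eq_right h, min_eq_left h]
    exact .swap a b []
  · rw [max_eq_left h, min_eq_right h]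

namespace GTInterlacing

variable (N : ℕ) (lam mu : ℕ → ℤ)

-- `upper j` and `lower j` are the `x j` and `z j` above; `merged` interleaves them.
def upper (j : ℕ) : ℤ :=
  if j = 0 then lam 0 else min (lam j) (mu (j - 1))

def lower (j : ℕ) : ℤ :=
  if j = N then lam (N + 1) else max (lam (j + 1)) (mu j)

def merged (k : ℕ) : ℤ :=
  if k % 2 = 0 then upper lam mu (k / 2) else lower N lam mu (k / 2)

variable {N lam mu}

theorem merged_two_mul (j : ℕ) : merged N lam mu (2 * j) = upper lam mu j := by
  simp [merged]

theorem merged_two_mul_add_one (j : ℕ) : merged N lam mu (2 * j + 1) = lower N lam mu j := by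
  simp [merged, Nat.add_mod, Nat.add_div]

theorem upper_le_lam (j : ℕ) : upper lam mu j ≤ lam j := by
  unfold upper
  split_ifs with hj
  · rw [hj]
  · exact min_le_left _ _

theorem upper_succ (j : ℕ) : upper lam mu (j + 1) = min (lam (j + 1)) (mu j) := by
  simp [upper]

theorem lam_succ_le_lower (j : ℕ) : lam (j + 1) ≤ lower N lam mu j := by
  unfold lower
  split_ifs with hj
  · rw [hj]
  · exact le_max_left _ _

theorem lower_of_ne {j : ℕ} (hj : j ≠ N) : lower N lam mu j = max (lam (j + 1)) (mu j) := by
  simp [lower, hj]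

theorem mu_le_lower {j : ℕ} (hj : j ≠ N) : mu j ≤ lower N lam mu j :=
  lower_of_ne hj ▸ le_max_right _ _

theorem upper_succ_le_lower {j : ℕ} (hj : j ≠ N) :
    upper lam mu (j + 1) ≤ lower N lam mu j := by
  rw [upper_succ, lower_of_ne hj]
  exact min_le_max

theorem interlaces_iff_lower_le_le_upper {κ : ℕ → ℤ} :
    Interlaces (N + 2) κ lam ∧ Interlaces (N + 1) mu κ ↔
      ∀ j < N + 1, lower N lam mu j ≤ κ j ∧ κ j ≤ upper lam mu j := by
  constructor
  · rintro ⟨hlam, hmu⟩ j hj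
    constructor
    · by_cases hjN : j = N
      · simpa [lower, hjN] using (hlam N (by omega)).2
      · rw [lower_of_ne hjN]
        exact max_le (hlam j (by omega)).2 (hmu j (by omega)).1
    · cases j with
      | zero => simpa [upper] using (hlam 0 (by omega)).1
      | succ j => exact upper_succ j ▸ le_min (hlam (j + 1) (by omega)).1 (hmu j (by omega)).2
  · intro h
    refine ⟨fun i hi => ⟨?_, ?_⟩, fun i hi => ⟨?_, ?_⟩⟩
    · exact (h i (by omega)).2.trans (upper_le_lam i)
    · exact (lam_succ_le_lower i).trans (h i (by omega)).1
    · exact (mu_le_lower (by omega)).trans (h i (by omega)).1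
    · exact (h (i + 1) (by omega)).2.trans (upper_succ i ▸ min_le_right _ _)

theorem weaklyDecr_merged (hd : DoublyInterlaces (N + 2) mu lam) :
    WeaklyDecr (2 * N + 2) (merged N lam mu) := by
  obtain ⟨κ, -, hlam, hmu⟩ := hd
  have hκ := interlaces_iff_lower_le_le_upper.mp ⟨hlam, hmu⟩
  intro k hk
  obtain ⟨j, rfl | rfl⟩ := Nat.even_or_odd' k
  · rw [merged_two_mul, merged_two_mul_add_one]
    exact (hκ j (by omega)).1.trans (hκ j (by omega)).2
  · rw [show 2 * j + 1 + 1 = 2 * (j + 1) by ring, merged_two_mul, merged_two_mul_add_one]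
    exact upper_succ_le_lower (by omega)

theorem merged_perm_of_le {K : ℕ} (hK : K ≤ N) :
    ((List.range (2 * K + 1)).map (merged N lam mu)).Perm
      ((List.range (K + 1)).map lam ++ (List.range K).map mu) := by
  induction K with
  | zero => simp [merged_two_mul 0, upper]
  | succ K ih =>
    have hpair : [lower N lam mu K, upper lam mu (K + 1)].Perm [lam (K + 1), mu K] := by
      rw [lower_of_ne (by omega), upper_succ]
      exact List.perm_max_min _ _
    have hsplit : (List.range (2 * (K + 1) + 1)).map (merged N lam mu) =
        (List.range (2 * K + 1)).map (merged N lam mu) ++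
          [lower N lam mu K, upper lam mu (K + 1)] := by
      rw [show 2 * (K + 1) + 1 = 2 * K + 1 + 1 + 1 by ring, List.range_succ (n := 2 * K + 1 + 1),
        List.range_succ (n := 2 * K + 1), ← merged_two_mul_add_one, ← merged_two_mul]
      simp only [List.map_append, List.map_cons, List.map_nil, List.append_assoc]
      rfl
    have hlam :
        (List.range (K + 1 + 1)).map lam = (List.range (K + 1)).map lam ++ [lam (K + 1)] := by
      simp [List.range_succ]
    have hmu : (List.range (K + 1)).map mu = (List.range K).map mu ++ [mu K] := by
      simp [List.range_succ]
    rw [hsplit, hlam, hmu]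
    exact ((ih (by omega)).append hpair).trans (by
      simpa only [List.append_assoc, List.singleton_append] using List.perm_middle.append_left _)

theorem merged_perm :
    ((List.range (2 * N + 2)).map (merged N lam mu)).Perm
      ((List.range (N + 2)).map lam ++ (List.range N).map mu) := by
  have hlast : merged N lam mu (2 * N + 1) = lam (N + 1) := by
    simp [merged_two_mul_add_one, lower]
  rw [List.range_succ (n := 2 * N + 1), List.range_succ (n := N + 1), List.map_append,
    List.map_append, List.map_singleton, List.map_singleton, hlast]
  refine ((merged_perm_of_le le_rfl).append_right _).trans ?_
  simpa only [List.append_assoc, List.singleton_append] using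
    (List.perm_append_singleton _ _).append_left _

theorem eq_merged_of_rearr {s : ℕ → ℤ} (hd : DoublyInterlaces (N + 2) mu lam)
    (hs : Rearr (N + 2) lam mu s) {k : ℕ} (hk : k < 2 * N + 2) : s k = merged N lam mu k := by
  obtain ⟨hdecr, hperm⟩ := hs
  have heq : (List.range (2 * N + 2)).map s = (List.range (2 * N + 2)).map (merged N lam mu) :=
    List.Perm.eq_of_sortedGE hdecr.sortedGE (weaklyDecr_merged hd).sortedGE
      (hperm.trans merged_perm.symm)
  have := List.getElem_of_eq heq (by simpa using hk)
  simpa only [List.getElem_map, List.getElem_range] using this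

end GTInterlacing

open GTInterlacing in
theorem stmt_3_general (n : ℕ) (hn : 2 ≤ n) (lam mu s : ℕ → ℤ)
    (hd : DoublyInterlaces n mu lam)
    (hs : Rearr n lam mu s) :
    Set.BijOn id
      {κ : Fin (n - 1) → ℤ |
        WeaklyDecr (n - 1) (fget κ) ∧ Interlaces n (fget κ) lam ∧
          Interlaces (n - 1) mu (fget κ)}
      {y : Fin (n - 1) → ℤ |
        ∀ j : ℕ, j < n - 1 → s (2 * j + 1) ≤ fget y j ∧ fget y j ≤ s (2 * j)} := by
  obtain ⟨N, rfl⟩ : ∃ N, n = N + 2 := ⟨n - 2, by omega⟩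
  convert Set.bijOn_id _ using 1
  ext κ
  simp only [Set.mem_ofPred_eq, show N + 2 - 1 = N + 1 from rfl]
  symm
  rw [and_iff_right_of_imp fun h => h.1.weaklyDecr, interlaces_iff_lower_le_le_upper]
  refine forall₂_congr fun j hj => ?_
  rw [eq_merged_of_rearr hd hs (by omega), eq_merged_of_rearr hd hs (by omega),
    merged_two_mul, merged_two_mul_add_one]

/-- The map sending an interlacing pattern `μ ⊑ κ ⊑ lam` to the `(n-1)`-tuple of GL₂
Gelfand-Tsetlin patterns with top rows `(x_i, z_i)` and middle entries `κ_i`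
(i.e. the identity on the tuple `κ`) is a bijection onto the set of tuples
`(y₁,…,y_{n-1})` with `x_i ≥ y_i ≥ z_i` for all `i`. -/
theorem stmt_3 (n : ℕ) (hn : 2 ≤ n) (lam mu s : ℕ → ℤ)
    (hlam : WeaklyDecr n lam) (hlam0 : NonnegSeq n lam)
    (hmu : WeaklyDecr (n - 2) mu) (hmu0 : NonnegSeq (n - 2) mu)
    (hd : DoublyInterlaces n mu lam)
    (hs : Rearr n lam mu s) :
    Set.BijOn id
      {κ : Fin (n - 1) → ℤ |
        WeaklyDecr (n - 1) (fget κ) ∧ Interlaces n (fget κ) lam ∧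
          Interlaces (n - 1) mu (fget κ)}
      {y : Fin (n - 1) → ℤ |
        ∀ j : ℕ, j < n - 1 → s (2 * j + 1) ≤ fget y j ∧ fget y j ≤ s (2 * j)} :=
  stmt_3_general n hn lam mu s hd hs
end

section
/- Let λ be a weakly decreasing sequence of n nonnegative integers and μ a weakly decreasing sequence of n-2 nonnegative integers doubly interlacing λ. Let (x₁, z₁, ..., x_{n-1}, z_{n-1}) be the weakly decreasing rearrangement of (λ₁,...,λ_n, μ₁,...,μ_{n-2}). Then the number of weakly decreasing sequences κ of length n-1 with μ ⊑ κ ⊑ λ equals ∏_{j=1}^{n-1} (x_j - z_j + 1). -/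
/-!
Write `n = k + 2`. The conditions `μ ⊑ κ ⊑ λ` decouple into independent interval conditions
`L j ≤ κ j ≤ U j`, where `U j = min (λ j, μ (j-1))` and `L j = max (λ (j+1), μ j)` (dropping the
terms that do not exist); that `κ` is weakly decreasing is then automatic, since
`κ (j+1) ≤ λ (j+1) ≤ κ j`. So the count is `∏ (U j - L j + 1)`, the intervals being nonempty
because some `κ` exists. The sequence `U 0, L 0, U 1, L 1, …, U k, L k` is weakly decreasing and,
since `{U (j+1), L j} = {λ (j+1), μ j}` as multisets, a rearrangement of `λ, μ`; by uniqueness of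
the sorted rearrangement, `x j = U j` and `z j = L j`.
-/

theorem Nat.card_Icc_pi_int {ι : Type*} [Fintype ι] [DecidableEq ι] (a b : ι → ℤ) :
    Nat.card (Set.Icc a b) = ∏ i, (b i + 1 - a i).toNat := by
  rw [Nat.card_eq_fintype_card, Fintype.card_Icc, Pi.card_Icc]
  simp only [Int.card_Icc]

theorem Multiset.coe_map_range_eq_sum {α : Type*} (f : ℕ → α) (m : ℕ) :
    (((List.range m).map f : List α) : Multiset α) = ∑ i ∈ Finset.range m, {f i} := by
  rw [← Multiset.sum_map_singleton (((List.range m).map f : List α) : Multiset α)]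
  simp [Finset.sum_eq_multiset_sum, Function.comp_def, ← Multiset.coe_range]

theorem Multiset.singleton_min_add_singleton_max {α : Type*} [LinearOrder α] (a b : α) :
    ({min a b} : Multiset α) + {max a b} = {a} + {b} := by
  rcases le_total a b with h | h
  · rw [min_eq_left h, max_eq_right h]
  · rw [min_eq_right h, max_eq_left h, add_comm]

theorem Finset.sum_range_two_mul_add_two {M : Type*} [AddCommMonoid M] (g : ℕ → M) (k : ℕ) :
    ∑ i ∈ range (2 * k + 2), g i =
      g 0 + ∑ j ∈ range k, (g (2 * j + 1) + g (2 * j + 2)) + g (2 * k + 1) := by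
  induction k with
  | zero => simp [sum_range_succ]
  | succ k ih =>
    rw [show 2 * (k + 1) + 2 = 2 * k + 2 + 1 + 1 by ring, sum_range_succ, sum_range_succ, ih,
      sum_range_succ]
    ring_nf
    abel

theorem WeaklyDecr.pairwise_map_range {m : ℕ} {f : ℕ → ℤ} (hf : WeaklyDecr m f) :
    ((List.range m).map f).Pairwise (· ≥ ·) := by
  rw [← List.isChain_iff_pairwise, List.isChain_map]
  cases m with
  | zero => simp
  | succ m => exact (List.isChain_range_succ _ _).2 fun i hi => hf i (by omega)

theorem WeaklyDecr.eq_of_perm {m : ℕ} {f g : ℕ → ℤ} (hf : WeaklyDecr m f)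
    (hg : WeaklyDecr m g) (h : ((List.range m).map f).Perm ((List.range m).map g)) {i : ℕ} (hi : i < m) : f i = g i :=
  List.map_eq_map_iff.1 (h.eq_of_pairwise' hf.pairwise_map_range hg.pairwise_map_range) i
    (List.mem_range.2 hi)

namespace DoubleInterlacing

section Bounds

variable (k : ℕ) (lam mu : ℕ → ℤ)

def upperBound (j : ℕ) : ℤ := if j = 0 then lam 0 else min (lam j) (mu (j - 1))

/-- Here `k` is the length of `mu`. -/
def lowerBound (j : ℕ) : ℤ := if j < k then max (lam (j + 1)) (mu j) else lam (j + 1)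

lemma upperBound_zero : upperBound lam mu 0 = lam 0 := rfl

lemma lowerBound_self : lowerBound k lam mu k = lam (k + 1) := by
  simp [lowerBound]

lemma upperBound_le_lam (j : ℕ) : upperBound lam mu j ≤ lam j := by
  unfold upperBound
  split_ifs with hj
  · rw [hj]
  · exact min_le_left _ _

lemma upperBound_succ_le_mu (j : ℕ) : upperBound lam mu (j + 1) ≤ mu j :=
  min_le_right _ _

lemma lam_succ_le_lowerBound (j : ℕ) : lam (j + 1) ≤ lowerBound k lam mu j := by
  unfold lowerBound
  split_ifs
  exacts [le_max_left _ _, le_rfl]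

lemma mu_le_lowerBound {j : ℕ} (hj : j < k) : mu j ≤ lowerBound k lam mu j := by
  simp only [lowerBound, if_pos hj, le_max_right]

lemma upperBound_succ_le_lowerBound (j : ℕ) :
    upperBound lam mu (j + 1) ≤ lowerBound k lam mu j :=
  (upperBound_le_lam lam mu _).trans (lam_succ_le_lowerBound k lam mu j)

theorem sandwich_iff (c : ℕ → ℤ) :
    (WeaklyDecr (k + 1) c ∧ Interlaces (k + 2) c lam ∧ Interlaces (k + 1) mu c) ↔
      ∀ j < k + 1, lowerBound k lam mu j ≤ c j ∧ c j ≤ upperBound lam mu j := by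
  constructor
  · rintro ⟨-, hc_lam, hmu_c⟩ j hj
    obtain ⟨hc_le_lam, hlam_le_c⟩ := hc_lam j (by omega)
    constructor
    · unfold lowerBound
      split_ifs with hjk
      exacts [max_le hlam_le_c (hmu_c j (by omega)).1, hlam_le_c]
    · unfold upperBound
      split_ifs with hj0
      · subst hj0; exact hc_le_lam
      · obtain ⟨i, rfl⟩ := Nat.exists_eq_succ_of_ne_zero hj0
        exact le_min hc_le_lam (hmu_c i (by omega)).2
  · intro h
    refine ⟨fun i hi => ?_, fun i hi => ⟨?_, ?_⟩, fun i hi => ⟨?_, ?_⟩⟩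
    · calc c (i + 1) ≤ upperBound lam mu (i + 1) := (h (i + 1) hi).2
        _ ≤ lowerBound k lam mu i := upperBound_succ_le_lowerBound k lam mu i
        _ ≤ c i := (h i (by omega)).1
    · exact (h i (by omega)).2.trans (upperBound_le_lam lam mu i)
    · exact (lam_succ_le_lowerBound k lam mu i).trans (h i (by omega)).1
    · exact (mu_le_lowerBound k lam mu (by omega)).trans (h i (by omega)).1
    · exact (h (i + 1) (by omega)).2.trans (upperBound_succ_le_mu lam mu i)

theorem lowerBound_le_upperBound (hd : DoublyInterlaces (k + 2) mu lam) {j : ℕ} (hj : j < k + 1) :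
    lowerBound k lam mu j ≤ upperBound lam mu j := by
  obtain ⟨κ, hκ⟩ := hd
  obtain ⟨hL, hU⟩ := (sandwich_iff k lam mu κ).1 hκ j hj
  exact hL.trans hU

theorem card_sandwich :
    Nat.card {κ : Fin (k + 1) → ℤ //
        WeaklyDecr (k + 1) (fget κ) ∧ Interlaces (k + 2) (fget κ) lam ∧
          Interlaces (k + 1) mu (fget κ)} =
      ∏ j ∈ Finset.range (k + 1), (upperBound lam mu j + 1 - lowerBound k lam mu j).toNat := by
  rw [← Fin.prod_univ_eq_prod_range, ← Nat.card_Icc_pi_int]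
  refine Nat.card_congr (Equiv.subtypeEquivRight fun κ => ?_)
  rw [sandwich_iff, Set.mem_Icc, Pi.le_def, Pi.le_def, ← forall_and, Fin.forall_iff]
  refine forall₂_congr fun j hj => ?_
  simp only [fget, dif_pos hj]

end Bounds


def interleave (u l : ℕ → ℤ) (i : ℕ) : ℤ := if i % 2 = 0 then u (i / 2) else l (i / 2)

@[simp] lemma interleave_zero (u l : ℕ → ℤ) : interleave u l 0 = u 0 := rfl

@[simp] lemma interleave_two_mul (u l : ℕ → ℤ) (j : ℕ) : interleave u l (2 * j) = u j := by
  simp [interleave]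

@[simp] lemma interleave_two_mul_add_one (u l : ℕ → ℤ) (j : ℕ) :
    interleave u l (2 * j + 1) = l j := by
  simp [interleave, Nat.add_mod, show (2 * j + 1) / 2 = j by omega]

@[simp] lemma interleave_two_mul_add_two (u l : ℕ → ℤ) (j : ℕ) :
    interleave u l (2 * j + 2) = u (j + 1) := by
  simpa [mul_add] using interleave_two_mul u l (j + 1)

section Rearrangement

variable (k : ℕ) (lam mu : ℕ → ℤ)

theorem weaklyDecr_interleave (hLU : ∀ j < k + 1, lowerBound k lam mu j ≤ upperBound lam mu j) :
    WeaklyDecr (2 * k + 2) (interleave (upperBound lam mu) (lowerBound k lam mu)) := by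
  intro i hi
  obtain ⟨j, rfl | rfl⟩ := Nat.even_or_odd' i
  · simpa using hLU j (by omega)
  · simpa [add_assoc] using upperBound_succ_le_lowerBound k lam mu j

theorem perm_interleave :
    ((List.range (2 * k + 2)).map (interleave (upperBound lam mu) (lowerBound k lam mu))).Perm
      ((List.range (k + 2)).map lam ++ (List.range k).map mu) := by
  rw [← Multiset.coe_eq_coe, ← Multiset.coe_add]
  simp only [Multiset.coe_map_range_eq_sum, Finset.sum_range_two_mul_add_two, interleave_zero,
    interleave_two_mul_add_one, interleave_two_mul_add_two]
  have hpairs : ∀ j ∈ Finset.range k,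
      ({lowerBound k lam mu j} : Multiset ℤ) + {upperBound lam mu (j + 1)} =
        {lam (j + 1)} + {mu j} := by
    intro j hj
    rw [add_comm]
    simp only [upperBound, lowerBound, if_neg (Nat.succ_ne_zero j), Nat.add_sub_cancel,
      if_pos (Finset.mem_range.1 hj)]
    exact Multiset.singleton_min_add_singleton_max _ _
  rw [Finset.sum_congr rfl hpairs, Finset.sum_add_distrib, Finset.sum_range_succ,
    Finset.sum_range_succ', upperBound_zero, lowerBound_self]
  abel

theorem eq_interleave_of_rearr {s : ℕ → ℤ} (hd : DoublyInterlaces (k + 2) mu lam)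
    (hs : Rearr (k + 2) lam mu s) {i : ℕ} (hi : i < 2 * k + 2) :
    s i = interleave (upperBound lam mu) (lowerBound k lam mu) i := by
  obtain ⟨hs_decr, hs_perm⟩ := hs
  rw [show 2 * (k + 2) - 2 = 2 * k + 2 by omega] at hs_decr hs_perm
  exact hs_decr.eq_of_perm
    (weaklyDecr_interleave k lam mu fun j => lowerBound_le_upperBound k lam mu hd)
    (hs_perm.trans (perm_interleave k lam mu).symm) hi

end Rearrangement

end DoubleInterlacing

open DoubleInterlacing

theorem stmt_4_general (n : ℕ) (hn : 2 ≤ n) (lam mu s : ℕ → ℤ)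
    (hd : DoublyInterlaces n mu lam)
    (hs : Rearr n lam mu s) :
    (Nat.card {κ : Fin (n - 1) → ℤ //
        WeaklyDecr (n - 1) (fget κ) ∧ Interlaces n (fget κ) lam ∧
          Interlaces (n - 1) mu (fget κ)} : ℤ) =
      ∏ j ∈ Finset.range (n - 1), (s (2 * j) - s (2 * j + 1) + 1) := by
  obtain ⟨k, rfl⟩ : ∃ k, n = k + 2 := ⟨n - 2, by omega⟩
  rw [show k + 2 - 1 = k + 1 by omega, card_sandwich, Nat.cast_prod]
  refine Finset.prod_congr rfl fun j hj => ?_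
  have hj := Finset.mem_range.1 hj
  rw [eq_interleave_of_rearr k lam mu hd hs (by omega),
    eq_interleave_of_rearr k lam mu hd hs (by omega), interleave_two_mul,
    interleave_two_mul_add_one,
    Int.toNat_of_nonneg (by linarith [lowerBound_le_upperBound k lam mu hd hj])]
  ring

/-- The number of weakly decreasing sequences `κ` of length `n-1` with
`μ ⊑ κ ⊑ lam` equals `∏_{j=1}^{n-1} (x_j - z_j + 1)`, where
`(x₁,z₁,…,x_{n-1},z_{n-1})` is the weakly decreasing rearrangement of the
concatenation of `lam` and `μ`. -/
theorem stmt_4 (n : ℕ) (hn : 2 ≤ n) (lam mu s : ℕ → ℤ)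
    (hlam : WeaklyDecr n lam) (hlam0 : NonnegSeq n lam)
    (hmu : WeaklyDecr (n - 2) mu) (hmu0 : NonnegSeq (n - 2) mu)
    (hd : DoublyInterlaces n mu lam)
    (hs : Rearr n lam mu s) :
    (Nat.card {κ : Fin (n - 1) → ℤ //
        WeaklyDecr (n - 1) (fget κ) ∧ Interlaces n (fget κ) lam ∧
          Interlaces (n - 1) mu (fget κ)} : ℤ) =
      ∏ j ∈ Finset.range (n - 1), (s (2 * j) - s (2 * j + 1) + 1) :=
  stmt_4_general n hn lam mu s hd hs
end

section
/- Conversely to the forward tiling map: let λ (length n) and μ (length n-2) be weakly decreasing sequences of nonnegative integers with μ doubly interlacing λ, and let (x₁,z₁,...,x_{n-1},z_{n-1}) be the weakly decreasing rearrangement of their concatenation. If (y₁,...,y_{n-1}) is any tuple of integers with x_j ≥ y_j ≥ z_j for all j, then (y₁,...,y_{n-1}) is weakly decreasing and satisfies μ ⊑ (y₁,...,y_{n-1}) ⊑ λ. -/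
theorem WeaklyDecr.antitoneOn {k : ℕ} {a : ℕ → ℤ} (h : WeaklyDecr k a) :
    AntitoneOn a (Set.Iio k) :=
  antitoneOn_of_add_one_le Set.ordConnected_Iio fun i _ _ hi => h i hi

theorem WeaklyDecr.apply_le_apply {k i j : ℕ} {a : ℕ → ℤ} (h : WeaklyDecr k a) (hij : i ≤ j)
    (hj : j < k) : a j ≤ a i :=
  h.antitoneOn (lt_of_le_of_lt hij hj) hj hij

section DoublyInterlaces

variable {n : ℕ} {mu lam : ℕ → ℤ}

theorem DoublyInterlaces.lam_add_two_le (hd : DoublyInterlaces n mu lam) (i : ℕ)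
    (hi : i < n - 2) : lam (i + 2) ≤ mu i := by
  obtain ⟨κ, -, hκ, hmu⟩ := hd
  exact (hκ (i + 1) (by omega)).2.trans (hmu i (by omega)).2

theorem DoublyInterlaces.le_lam (hd : DoublyInterlaces n mu lam) (i : ℕ) (hi : i < n - 2) :
    mu i ≤ lam i := by
  obtain ⟨κ, -, hκ, hmu⟩ := hd
  exact (hmu i (by omega)).1.trans (hκ i (by omega)).1

end DoublyInterlaces

namespace List

theorem countP_range_le_of_forall {m c : ℕ} {p : ℕ → Bool}
    (h : ∀ i < m, p i → i < c) : (range m).countP p ≤ c := by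
  have hsub : (range m).filter p ⊆ range c := by
    intro i hi
    simp only [mem_filter, mem_range] at hi ⊢
    exact h i hi.1 hi.2
  simpa [countP_eq_length_filter] using
    (subperm_of_subset (nodup_range.filter p) hsub).length_le

theorem le_countP_range_of_forall {m c : ℕ} {p : ℕ → Bool} (hc : c ≤ m)
    (h : ∀ i < c, p i) : c ≤ (range m).countP p := by
  have hall : (range c).countP p = c := by
    simpa using countP_eq_length.mpr fun i hi => h i (mem_range.mp hi)
  exact hall ▸ (range_sublist.mpr hc).countP_le

end List

section OrderStatistics

variable {m k : ℕ} {s : ℕ → ℤ} {t : ℤ}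

theorem WeaklyDecr.apply_le_of_countP_le (hs : WeaklyDecr m s) (hk : k < m)
    (h : (List.range m).countP (fun i => decide (t < s i)) ≤ k) : s k ≤ t := by
  by_contra! hlt
  have : k + 1 ≤ (List.range m).countP (fun i => decide (t < s i)) :=
    List.le_countP_range_of_forall hk fun i hi =>
      decide_eq_true (hlt.trans_le (hs.apply_le_apply (Nat.le_of_lt_succ hi) hk))
  omega

theorem WeaklyDecr.le_apply_of_le_countP (hs : WeaklyDecr m s)
    (h : k + 1 ≤ (List.range m).countP (fun i => decide (t ≤ s i))) : t ≤ s k := by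
  by_contra! hlt
  have : (List.range m).countP (fun i => decide (t ≤ s i)) ≤ k :=
    List.countP_range_le_of_forall fun i hi hti =>
      not_le.mp fun hki => ((hs.apply_le_apply hki hi).trans_lt hlt).not_ge (of_decide_eq_true hti)
  omega

variable {p q a b : ℕ} {f g : ℕ → ℤ}

theorem countP_range_eq_of_perm_append
    (hperm : ((List.range m).map s).Perm ((List.range p).map f ++ (List.range q).map g))
    (P : ℤ → Bool) :
    (List.range m).countP (fun i => P (s i)) =
      (List.range p).countP (fun i => P (f i)) + (List.range q).countP (fun i => P (g i)) := by
  simpa [List.countP_map, List.countP_append, Function.comp_def] using hperm.countP_eq P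

theorem WeaklyDecr.apply_le_of_perm_append (hs : WeaklyDecr m s)
    (hperm : ((List.range m).map s).Perm ((List.range p).map f ++ (List.range q).map g))
    (hk : k < m) (hab : a + b ≤ k) (hf : ∀ i < p, t < f i → i < a)
    (hg : ∀ i < q, t < g i → i < b) : s k ≤ t := by
  refine hs.apply_le_of_countP_le hk ?_
  rw [countP_range_eq_of_perm_append hperm fun v => decide (t < v)]
  have hfa := List.countP_range_le_of_forall (p := fun i => decide (t < f i)) fun i hi hti =>
    hf i hi (of_decide_eq_true hti)
  have hgb := List.countP_range_le_of_forall (p := fun i => decide (t < g i)) fun i hi hti =>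
    hg i hi (of_decide_eq_true hti)
  omega

theorem WeaklyDecr.le_apply_of_perm_append (hs : WeaklyDecr m s)
    (hperm : ((List.range m).map s).Perm ((List.range p).map f ++ (List.range q).map g))
    (hab : k + 1 ≤ a + b) (ha : a ≤ p) (hb : b ≤ q) (hf : ∀ i < a, t ≤ f i)
    (hg : ∀ i < b, t ≤ g i) : t ≤ s k := by
  refine hs.le_apply_of_le_countP ?_
  rw [countP_range_eq_of_perm_append hperm fun v => decide (t ≤ v)]
  have hfa := List.le_countP_range_of_forall (p := fun i => decide (t ≤ f i)) ha fun i hi =>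
    decide_eq_true (hf i hi)
  have hgb := List.le_countP_range_of_forall (p := fun i => decide (t ≤ g i)) hb fun i hi =>
    decide_eq_true (hg i hi)
  omega

end OrderStatistics

namespace Rearr

variable {n : ℕ} {lam mu s : ℕ → ℤ}

theorem apply_two_mul_le_lam (hs : Rearr n lam mu s) (hlam : WeaklyDecr n lam)
    (hle : ∀ i < n - 2, mu i ≤ lam i) (j : ℕ) (hj : j < n - 1) : s (2 * j) ≤ lam j :=
  hs.1.apply_le_of_perm_append hs.2 (a := j) (b := j) (by omega) (by omega)
    (fun i hi hlt => not_le.mp fun hji => (hlam.apply_le_apply hji hi).not_gt hlt)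
    (fun i hi hlt => not_le.mp fun hji =>
      (hlam.apply_le_apply hji (by omega)).not_gt (hlt.trans_le (hle i hi)))

theorem lam_succ_le_apply (hs : Rearr n lam mu s) (hlam : WeaklyDecr n lam)
    (hle : ∀ i < n - 2, lam (i + 2) ≤ mu i) (j : ℕ) (hj : j + 1 < n) :
    lam (j + 1) ≤ s (2 * j + 1) :=
  hs.1.le_apply_of_perm_append hs.2 (a := j + 2) (b := j) (by omega) (by omega) (by omega)
    (fun i hi => hlam.apply_le_apply (by omega) (by omega))
    (fun i hi => (hlam.apply_le_apply (by omega) (by omega)).trans (hle i (by omega)))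

theorem mu_le_apply (hs : Rearr n lam mu s) (hlam : WeaklyDecr n lam)
    (hmu : WeaklyDecr (n - 2) mu) (hle : ∀ i < n - 2, mu i ≤ lam i) (j : ℕ) (hj : j < n - 2) :
    mu j ≤ s (2 * j + 1) :=
  hs.1.le_apply_of_perm_append hs.2 (a := j + 1) (b := j + 1) (by omega) (by omega) (by omega)
    (fun i hi => (hle j hj).trans (hlam.apply_le_apply (by omega) (by omega)))
    (fun i hi => hmu.apply_le_apply (by omega) hj)

theorem apply_two_mul_succ_le_mu (hs : Rearr n lam mu s) (hlam : WeaklyDecr n lam)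
    (hmu : WeaklyDecr (n - 2) mu) (hle : ∀ i < n - 2, lam (i + 2) ≤ mu i) (j : ℕ)
    (hj : j < n - 2) : s (2 * (j + 1)) ≤ mu j :=
  hs.1.apply_le_of_perm_append hs.2 (a := j + 2) (b := j) (by omega) (by omega)
    (fun i hi hlt => not_le.mp fun hji =>
      (hlam.apply_le_apply hji hi).not_gt ((hle j hj).trans_lt hlt))
    (fun i hi hlt => not_le.mp fun hji => (hmu.apply_le_apply hji hi).not_gt hlt)

end Rearr

theorem stmt_13_general (n : ℕ) (lam mu s : ℕ → ℤ)
    (hlam : WeaklyDecr n lam)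
    (hmu : WeaklyDecr (n - 2) mu)
    (hd : DoublyInterlaces n mu lam)
    (hs : Rearr n lam mu s)
    (y : ℕ → ℤ) (hy : ∀ j : ℕ, j < n - 1 → s (2 * j + 1) ≤ y j ∧ y j ≤ s (2 * j)) :
    WeaklyDecr (n - 1) y ∧ Interlaces n y lam ∧ Interlaces (n - 1) mu y := by
  refine ⟨fun i hi => ?_, fun i hi => ⟨?_, ?_⟩, fun i hi => ⟨?_, ?_⟩⟩
  · calc y (i + 1) ≤ s (2 * (i + 1)) := (hy (i + 1) hi).2
      _ ≤ s (2 * i + 1) := hs.1 (2 * i + 1) (by omega)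
      _ ≤ y i := (hy i (by omega)).1
  · exact (hy i (by omega)).2.trans (hs.apply_two_mul_le_lam hlam hd.le_lam i (by omega))
  · exact (hs.lam_succ_le_apply hlam hd.lam_add_two_le i hi).trans (hy i (by omega)).1
  · exact (hs.mu_le_apply hlam hmu hd.le_lam i (by omega)).trans (hy i (by omega)).1
  · exact (hy (i + 1) hi).2.trans
      (hs.apply_two_mul_succ_le_mu hlam hmu hd.lam_add_two_le i (by omega))

/-- Inverse direction of the tiling bijection: any tuple `(y₁,…,y_{n-1})` with
`x_j ≥ y_j ≥ z_j` for all `j` is weakly decreasing and satisfies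
`μ ⊑ (y₁,…,y_{n-1}) ⊑ λ`. -/
theorem stmt_13 (n : ℕ) (hn : 2 ≤ n) (lam mu s : ℕ → ℤ)
    (hlam : WeaklyDecr n lam) (hlam0 : NonnegSeq n lam)
    (hmu : WeaklyDecr (n - 2) mu) (hmu0 : NonnegSeq (n - 2) mu)
    (hd : DoublyInterlaces n mu lam)
    (hs : Rearr n lam mu s)
    (y : ℕ → ℤ) (hy : ∀ j : ℕ, j < n - 1 → s (2 * j + 1) ≤ y j ∧ y j ≤ s (2 * j)) :
    WeaklyDecr (n - 1) y ∧ Interlaces n y lam ∧ Interlaces (n - 1) mu y :=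
  stmt_13_general n lam mu s hlam hmu hd hs y hy
end
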